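/- If a simplicial complex K is d-collapsible, then there exists a d-collapsing of K in which first only (d−1)-dimensional faces are collapsed and afterwards only faces of dimension less than d−1 are removed (each removed face being a maximal face at the time of removal). -/

import Mathlib

open Finset

variable {V : Type*} [DecidableEq V]

/-- An (abstract, finite) simplicial complex: a set system closed under taking subsets. -/
def IsComplex (K : Finset (Finset V)) : Prop :=
  ∀ σ ∈ K, ∀ τ ⊆ σ, τ ∈ K

/-- `τ` is the unique maximal face of `K` containing `σ`. -/
def IsTau (K : Finset (Finset V)) (σ τ : Finset V) : Prop :=
  σ ∈ K ∧ τ ∈ K ∧ σ ⊆ τ ∧ ∀ η ∈ K, σ ⊆ η → η ⊆ τ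

/-- `σ` is a `d`-collapsible face of `K`: `dim σ ≤ d - 1` (i.e. `σ.card ≤ d`) and `σ`
is contained in a unique maximal face of `K`. -/
def DCollFace (d : ℕ) (K : Finset (Finset V)) (σ : Finset V) : Prop :=
  σ.card ≤ d ∧ ∃ τ, IsTau K σ τ

/-- The result `K_σ` of the elementary collapse at `σ`: all faces containing `σ` are removed
(they all lie between `σ` and `τ(σ)`). -/
def collapseAt (K : Finset (Finset V)) (σ : Finset V) : Finset (Finset V) :=
  K.filter (fun η => ¬ σ ⊆ η)

/-- One elementary `d`-collapse. -/
def ElemCollapse (d : ℕ) (K K' : Finset (Finset V)) : Prop :=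
  ∃ σ, DCollFace d K σ ∧ K' = collapseAt K σ

/-- `K` `d`-collapses to `L`. -/
def CollapsesTo (d : ℕ) (K L : Finset (Finset V)) : Prop :=
  Relation.ReflTransGen (ElemCollapse d) K L

/-- `K` is `d`-collapsible. -/
def DCollapsible (d : ℕ) (K : Finset (Finset V)) : Prop :=
  CollapsesTo d K ∅

/-- Result of successively collapsing the faces in the list `L`. -/
def collapseList (K : Finset (Finset V)) (L : List (Finset V)) : Finset (Finset V) :=
  L.foldl collapseAt K

/-- `L` is a valid sequence of elementary `d`-collapses starting at `K`. -/
def IsCollapseSeq (d : ℕ) (K : Finset (Finset V)) (L : List (Finset V)) : Prop :=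
  ∀ (i : ℕ) (h : i < L.length), DCollFace d (collapseList K (L.take i)) (L.get ⟨i, h⟩)

/-!
An elementary collapse at a face `σ` of size `< d` with free coface `τ ⊋ σ` splits, for any
`v ∈ τ \ σ`, into the collapse at `insert v σ` followed by the collapse at `σ` in the smaller
complex, whose free coface is then `τ.erase v`. Iterating (by induction on `#(τ \ σ)`) turns
every elementary collapse into collapses at faces of size exactly `d` and removals of maximal
faces of size `< d`. A removal of a maximal face `σ` with `#σ < d` commutes with any later
collapse at a face `p` of size `d`, since `p ⊄ σ`; so all removals can be moved to the end.
-/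

def CollapseStep (P : Finset (Finset V) → Finset V → Prop) (K K' : Finset (Finset V)) : Prop :=
  ∃ σ, P K σ ∧ K' = collapseAt K σ

def IsCollapseSeqBy (P : Finset (Finset V) → Finset V → Prop) (K : Finset (Finset V))
    (L : List (Finset V)) : Prop :=
  ∀ (i : ℕ) (hi : i < L.length), P (collapseList K (L.take i)) L[i]

def IsTopFace (d : ℕ) (K : Finset (Finset V)) (σ : Finset V) : Prop :=
  σ.card = d ∧ ∃ τ, IsTau K σ τ

def IsLowFacet (d : ℕ) (K : Finset (Finset V)) (σ : Finset V) : Prop :=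
  σ.card < d ∧ IsTau K σ σ

def SortedCollapsible (d : ℕ) (K : Finset (Finset V)) : Prop :=
  ∃ M, Relation.ReflTransGen (CollapseStep (IsTopFace d)) K M ∧
    Relation.ReflTransGen (CollapseStep (IsLowFacet d)) M ∅

section collapseAt

variable {K N : Finset (Finset V)} {σ p η : Finset V}

lemma mem_collapseAt : η ∈ collapseAt K σ ↔ η ∈ K ∧ ¬ σ ⊆ η :=
  mem_filter

lemma isComplex_collapseAt (hK : IsComplex K) (σ : Finset V) : IsComplex (collapseAt K σ) := by
  intro η hη ζ hζ
  rw [mem_collapseAt] at hη ⊢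
  exact ⟨hK η hη.1 ζ hζ, fun h => hη.2 (h.trans hζ)⟩

lemma collapseAt_collapseAt_of_subset (hσp : σ ⊆ p) :
    collapseAt (collapseAt K p) σ = collapseAt K σ := by
  ext η
  simp only [mem_collapseAt]
  exact ⟨fun h => ⟨h.1.1, h.2⟩, fun h => ⟨⟨h.1, fun hp => h.2 (hσp.trans hp)⟩, h.2⟩⟩

lemma collapseAt_insert (hp : ¬ p ⊆ σ) :
    collapseAt (insert σ N) p = insert σ (collapseAt N p) := by
  ext η
  simp only [mem_collapseAt, mem_insert]
  constructor
  · rintro ⟨rfl | h, hn⟩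
    exacts [Or.inl rfl, Or.inr ⟨h, hn⟩]
  · rintro (rfl | ⟨h, hn⟩)
    exacts [⟨Or.inl rfl, hp⟩, ⟨Or.inr h, hn⟩]

lemma collapseAt_insert_self (hN : ∀ η ∈ N, ¬ σ ⊆ η) : collapseAt (insert σ N) σ = N := by
  ext η
  simp only [mem_collapseAt, mem_insert]
  constructor
  · rintro ⟨rfl | h, hn⟩
    exacts [absurd subset_rfl hn, h]
  · exact fun h => ⟨Or.inr h, hN η h⟩

lemma insert_collapseAt_of_isTau_self (hσ : IsTau K σ σ) : insert σ (collapseAt K σ) = K := by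
  ext η
  simp only [mem_insert, mem_collapseAt]
  constructor
  · rintro (rfl | ⟨hη, _⟩)
    exacts [hσ.1, hη]
  · intro hη
    by_cases hs : σ ⊆ η
    · exact Or.inl (Subset.antisymm (hσ.2.2.2 η hη hs) hs)
    · exact Or.inr ⟨hη, hs⟩

end collapseAt

section IsTau

variable {K : Finset (Finset V)} {σ τ p : Finset V} {v : V}

lemma IsTau.insert_of_not_subset (hps : ¬ p ⊆ σ) {N : Finset (Finset V)} (h : IsTau N p τ) :
    IsTau (insert σ N) p τ := by
  refine ⟨mem_insert_of_mem h.1, mem_insert_of_mem h.2.1, h.2.2.1, fun η hη hpη => ?_⟩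
  rcases mem_insert.mp hη with rfl | hη
  exacts [absurd hpη hps, h.2.2.2 η hη hpη]

lemma isTau_insert_self {N : Finset (Finset V)} (hN : ∀ η ∈ N, ¬ σ ⊆ η) :
    IsTau (insert σ N) σ σ := by
  refine ⟨mem_insert_self σ N, mem_insert_self σ N, subset_rfl, fun η hη hση => ?_⟩
  rcases mem_insert.mp hη with rfl | hη
  exacts [subset_rfl, absurd hση (hN η hη)]

lemma IsTau.insert_of_mem (hK : IsComplex K) (h : IsTau K σ τ) (hv : v ∈ τ) :
    IsTau K (insert v σ) τ := by
  have hvσ : insert v σ ⊆ τ := insert_subset hv h.2.2.1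
  exact ⟨hK τ h.2.1 _ hvσ, h.2.1, hvσ,
    fun η hη hs => h.2.2.2 η hη ((subset_insert v σ).trans hs)⟩

lemma IsTau.collapseAt_insert (hK : IsComplex K) (h : IsTau K σ τ) (hvσ : v ∉ σ) :
    IsTau (collapseAt K (insert v σ)) σ (τ.erase v) := by
  refine ⟨?_, ?_, subset_erase.mpr ⟨h.2.2.1, hvσ⟩, fun η hη hs => ?_⟩
  · exact mem_collapseAt.mpr ⟨h.1, fun hs => hvσ (hs (mem_insert_self v σ))⟩
  · exact mem_collapseAt.mpr ⟨hK τ h.2.1 _ (erase_subset v τ),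
      fun hs => notMem_erase v τ (hs (mem_insert_self v σ))⟩
  · obtain ⟨hηK, hvη⟩ := mem_collapseAt.mp hη
    exact subset_erase.mpr ⟨h.2.2.2 η hηK hs, fun hv => hvη (insert_subset hv hs)⟩

end IsTau

section CollapseStep

variable {P : Finset (Finset V) → Finset V → Prop} {K M : Finset (Finset V)}

lemma collapseList_append (K : Finset (Finset V)) (A B : List (Finset V)) :
    collapseList K (A ++ B) = collapseList (collapseList K A) B :=
  List.foldl_append ..

lemma subset_of_reflTransGen_collapseStep (h : Relation.ReflTransGen (CollapseStep P) K M) :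
    M ⊆ K := by
  induction h with
  | refl => exact subset_rfl
  | tail _ hstep ih =>
    obtain ⟨σ, -, rfl⟩ := hstep
    exact (filter_subset _ _).trans ih

lemma exists_list_of_reflTransGen_collapseStep
    (h : Relation.ReflTransGen (CollapseStep P) K M) :
    ∃ L : List (Finset V), IsCollapseSeqBy P K L ∧ collapseList K L = M := by
  induction h using Relation.ReflTransGen.head_induction_on with
  | refl => exact ⟨[], fun i hi => absurd hi (Nat.not_lt_zero i), rfl⟩
  | head hstep _ ih =>
    obtain ⟨σ, hσ, rfl⟩ := hstep
    obtain ⟨L, hL, hLM⟩ := ih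
    refine ⟨σ :: L, fun i hi => ?_, hLM⟩
    cases i with
    | zero => exact hσ
    | succ j => exact hL j (Nat.lt_of_succ_lt_succ hi)

lemma IsCollapseSeqBy.getElem_append_left {A : List (Finset V)} (h : IsCollapseSeqBy P K A)
    (B : List (Finset V)) {i : ℕ} (hi : i < A.length) :
    P (collapseList K ((A ++ B).take i)) ((A ++ B)[i]'(by simp; omega)) := by
  rw [List.take_append_of_le_length hi.le, List.getElem_append_left hi]
  exact h i hi

lemma IsCollapseSeqBy.getElem_append_right {A B : List (Finset V)}
    (h : IsCollapseSeqBy P (collapseList K A) B) {i : ℕ} (hi : A.length ≤ i)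
    (hi' : i < (A ++ B).length) : P (collapseList K ((A ++ B).take i)) (A ++ B)[i] := by
  rw [List.take_append, List.take_of_length_le hi, collapseList_append,
    List.getElem_append_right hi]
  exact h _ _

end CollapseStep

section SortedCollapsible

variable {d : ℕ}

lemma SortedCollapsible.of_collapseAt_top {K : Finset (Finset V)} {σ τ : Finset V}
    (hσ : σ.card = d) (hτ : IsTau K σ τ) (h : SortedCollapsible d (collapseAt K σ)) :
    SortedCollapsible d K := by
  obtain ⟨M, hKM, hM⟩ := h
  exact ⟨M, .head ⟨σ, ⟨hσ, τ, hτ⟩, rfl⟩ hKM, hM⟩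

lemma SortedCollapsible.of_collapseAt_low {K : Finset (Finset V)} {σ : Finset V}
    (hσ : σ.card < d) (hτ : IsTau K σ σ) (h : SortedCollapsible d (collapseAt K σ)) :
    SortedCollapsible d K := by
  obtain ⟨M, hKM, hM⟩ := h
  have hnot_sub : ∀ p : Finset V, p.card = d → ¬ p ⊆ σ :=
    fun p hp hpσ => (card_le_card hpσ).not_gt (hp ▸ hσ)
  have hlift : Relation.ReflTransGen (CollapseStep (IsTopFace d)) K (insert σ M) := by
    rw [← insert_collapseAt_of_isTau_self hτ]
    refine hKM.lift (insert σ) fun N N' ⟨p, ⟨hp, τ', hτ'⟩, hN'⟩ => ?_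
    exact ⟨p, ⟨hp, τ', hτ'.insert_of_not_subset (hnot_sub p hp)⟩,
      hN' ▸ (collapseAt_insert (hnot_sub p hp)).symm⟩
  have hM_free : ∀ η ∈ M, ¬ σ ⊆ η := fun η hη =>
    (mem_collapseAt.mp (subset_of_reflTransGen_collapseStep hKM hη)).2
  exact ⟨insert σ M, hlift,
    .head ⟨σ, ⟨hσ, isTau_insert_self hM_free⟩, (collapseAt_insert_self hM_free).symm⟩ hM⟩

theorem SortedCollapsible.of_collapseAt {K : Finset (Finset V)} {σ τ : Finset V}
    (hK : IsComplex K) (hτ : IsTau K σ τ) (hσ : σ.card ≤ d)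
    (h : SortedCollapsible d (collapseAt K σ)) : SortedCollapsible d K := by
  rcases hσ.eq_or_lt with hσ | hσ
  · exact h.of_collapseAt_top hσ hτ
  by_cases hτσ : τ ⊆ σ
  · exact h.of_collapseAt_low hσ (Subset.antisymm hτσ hτ.2.2.1 ▸ hτ)
  obtain ⟨v, hvτ, hvσ⟩ := not_subset.mp hτσ
  have hv : v ∈ τ \ σ := mem_sdiff.mpr ⟨hvτ, hvσ⟩
  have h' : SortedCollapsible d (collapseAt K (insert v σ)) :=
    .of_collapseAt (isComplex_collapseAt hK _) (hτ.collapseAt_insert hK hvσ) hσ.le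
      (by rwa [collapseAt_collapseAt_of_subset (subset_insert v σ)])
  exact .of_collapseAt hK (hτ.insert_of_mem hK hvτ) (card_insert_le v σ |>.trans hσ) h'
termination_by (τ \ σ).card
decreasing_by
  · rw [erase_sdiff_comm]; exact card_erase_lt_of_mem hv
  · rw [sdiff_insert]; exact card_erase_lt_of_mem hv

lemma sortedCollapsible_of_collapsesTo {K : Finset (Finset V)} (hK : IsComplex K)
    (h : CollapsesTo d K ∅) : SortedCollapsible d K := by
  induction h using Relation.ReflTransGen.head_induction_on with
  | refl => exact ⟨∅, .refl, .refl⟩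
  | head hstep _ ih =>
    obtain ⟨σ, ⟨hσ, τ, hτ⟩, rfl⟩ := hstep
    exact (ih (isComplex_collapseAt hK σ)).of_collapseAt hK hτ hσ

end SortedCollapsible

/-- A `d`-collapsible complex admits a `d`-collapsing in which first only `(d-1)`-dimensional
faces are collapsed, and afterwards only faces of dimension `< d-1` are removed, each of
them being a maximal face of the current complex (`IsTau _ σ σ`). -/
theorem stmt6 (d : ℕ) (K : Finset (Finset V)) (hK : IsComplex K)
    (hcoll : DCollapsible d K) :
    ∃ (L : List (Finset V)) (k : ℕ), IsCollapseSeq d K L ∧ collapseList K L = ∅ ∧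
      k ≤ L.length ∧
      (∀ (i : ℕ) (h : i < L.length), i < k → (L.get ⟨i, h⟩).card = d) ∧
      (∀ (i : ℕ) (h : i < L.length), k ≤ i → (L.get ⟨i, h⟩).card < d ∧
        IsTau (collapseList K (L.take i)) (L.get ⟨i, h⟩) (L.get ⟨i, h⟩)) := by
  obtain ⟨M, hKM, hM⟩ := sortedCollapsible_of_collapsesTo hK hcoll
  obtain ⟨A, hA, rfl⟩ := exists_list_of_reflTransGen_collapseStep hKM
  obtain ⟨B, hB, hB0⟩ := exists_list_of_reflTransGen_collapseStep hM
  refine ⟨A ++ B, A.length, fun i hi => ?_, by rw [collapseList_append, hB0], by simp,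
    fun i _ hiA => (hA.getElem_append_left B hiA).1,
    fun i hi hiA => hB.getElem_append_right hiA hi⟩
  rcases lt_or_ge i A.length with hiA | hiA
  · obtain ⟨hcard, hτ⟩ := hA.getElem_append_left B hiA
    exact ⟨hcard.le, hτ⟩
  · obtain ⟨hcard, hτ⟩ := hB.getElem_append_right hiA hi
    exact ⟨hcard.le, _, hτ⟩
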